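/- arXiv:2302.12444 — 5 statements merged into one kernel-verified Lean document; each statement's English description precedes it below -/
import Mathlib

section
/- Let Z = {(x_i, y_i)}_{i=1}^N ⊂ ℝ^d × {−1,+1} be a binary dataset with separability decomposition Z = S^LS ⊔ S^SC, and let L be the logistic risk on Z. If v ∈ ℝ^d is an optimal direction for L, then ⟨v, x⟩ = 0 for every x in the span of the features of S^SC, and y_i⟨v, x_i⟩ > 0 for every (x_i, y_i) ∈ S^LS. -/
/-!
Summing witnesses of the points of `S^LS` gives one direction `u₀` whose margins are nonnegative
and vanish exactly on `S^SC`. Along any direction `w` with nonnegative margins, `L(u + t w)`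
tends to the loss of `u` on the points where `w` has zero margin; along `u₀` this bounds
`inf L` by the loss of `u` on `S^SC`. An optimal direction `v` has nonnegative margins (a
negative one drives the risk to `∞`), hence zero margins on `S^SC`, since a nonzero margin would
put the point in `S^LS`. If `v` also had a zero margin on `S^LS`, its limiting risk would
strictly exceed the bound obtained along `u₀`. Finally `y i = ±1`, so a zero margin means
`⟪v, x i⟫ = 0`.
-/

open Filter

namespace SGDBN4

/-- Euclidean inner product on `Fin d → ℝ`. -/
noncomputable def dot {d : ℕ} (u v : Fin d → ℝ) : ℝ := ∑ k, u k * v k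

/-- Logistic risk of the linear classifier `v` on the dataset `(x, y)`. -/
noncomputable def logisticRisk {d N : ℕ} (x : Fin N → Fin d → ℝ) (y : Fin N → ℝ)
    (v : Fin d → ℝ) : ℝ :=
  ∑ i, Real.log (1 + Real.exp (-(y i * dot v (x i))))

/-- The (index set of the) maximal linearly separable subset `S^LS`. -/
def LSset {d N : ℕ} (x : Fin N → Fin d → ℝ) (y : Fin N → ℝ) : Set (Fin N) :=
  {i | ∃ u : Fin d → ℝ, 0 < y i * dot u (x i) ∧ ∀ j, 0 ≤ y j * dot u (x j)}

/-- `v` is an optimal direction for the logistic risk: for some `u`,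
`L(u + t v) → inf_w L(w)` as `t → ∞`. -/
def OptimalDirection {d N : ℕ} (x : Fin N → Fin d → ℝ) (y : Fin N → ℝ)
    (v : Fin d → ℝ) : Prop :=
  ∃ u : Fin d → ℝ,
    Tendsto (fun t : ℝ => logisticRisk x y (u + t • v)) atTop
      (nhds (⨅ w : Fin d → ℝ, logisticRisk x y w))

noncomputable def logisticLoss (s : ℝ) : ℝ := Real.log (1 + Real.exp (-s))

lemma logisticLoss_pos (s : ℝ) : 0 < logisticLoss s :=
  Real.log_pos (by linarith [Real.exp_pos (-s)])

lemma tendsto_logisticLoss_atTop : Tendsto logisticLoss atTop (nhds 0) := by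
  have h : Tendsto (fun s => 1 + Real.exp (-s)) atTop (nhds 1) := by
    simpa using Real.tendsto_exp_neg_atTop_nhds_zero.const_add 1
  have := (Real.continuousAt_log one_ne_zero).tendsto.comp h
  rwa [Real.log_one] at this

lemma tendsto_logisticLoss_atBot : Tendsto logisticLoss atBot atTop :=
  Real.tendsto_log_atTop.comp <| tendsto_atTop_add_const_left _ 1 <|
    Real.tendsto_exp_atTop.comp tendsto_neg_atBot_atTop

lemma tendsto_const_add_mul_atTop (a : ℝ) {m : ℝ} (hm : 0 < m) :
    Tendsto (fun t : ℝ => a + t * m) atTop atTop :=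
  tendsto_atTop_add_const_left _ a (tendsto_id.atTop_mul_const hm)

lemma tendsto_const_add_mul_atBot (a : ℝ) {m : ℝ} (hm : m < 0) :
    Tendsto (fun t : ℝ => a + t * m) atTop atBot :=
  tendsto_atBot_add_const_left _ a (tendsto_id.atTop_mul_const_of_neg hm)

section Dataset

variable {d N : ℕ} (x : Fin N → Fin d → ℝ) (y : Fin N → ℝ)

lemma dot_eq_dotProduct (u w : Fin d → ℝ) : dot u w = dotProduct u w := rfl

lemma logisticRisk_eq_sum (w : Fin d → ℝ) :
    logisticRisk x y w = ∑ i, logisticLoss (y i * dot w (x i)) := rfl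

lemma margin_add_smul (w w' : Fin d → ℝ) (t : ℝ) (i : Fin N) :
    y i * dot (w + t • w') (x i) = y i * dot w (x i) + t * (y i * dot w' (x i)) := by
  simp only [dot_eq_dotProduct, add_dotProduct, smul_dotProduct, smul_eq_mul]
  ring

lemma logisticRisk_nonneg (w : Fin d → ℝ) : 0 ≤ logisticRisk x y w :=
  Finset.sum_nonneg fun _ _ => (logisticLoss_pos _).le

lemma bddBelow_range_logisticRisk : BddBelow (Set.range (logisticRisk x y)) :=
  ⟨0, by rintro _ ⟨w, rfl⟩; exact logisticRisk_nonneg x y w⟩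

noncomputable def zeroMargins (w : Fin d → ℝ) : Finset (Fin N) :=
  Finset.univ.filter fun i => y i * dot w (x i) = 0

lemma tendsto_logisticRisk_add_smul {w : Fin d → ℝ} (hw : ∀ i, 0 ≤ y i * dot w (x i))
    (u : Fin d → ℝ) :
    Tendsto (fun t : ℝ => logisticRisk x y (u + t • w)) atTop
      (nhds (∑ i ∈ zeroMargins x y w, logisticLoss (y i * dot u (x i)))) := by
  simp only [zeroMargins, Finset.sum_filter, logisticRisk_eq_sum, margin_add_smul]
  refine tendsto_finsetSum _ fun i _ => ?_
  split_ifs with h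
  · simp only [h, mul_zero, add_zero, tendsto_const_nhds]
  · exact tendsto_logisticLoss_atTop.comp
      (tendsto_const_add_mul_atTop _ (lt_of_le_of_ne (hw i) (Ne.symm h)))

lemma tendsto_logisticRisk_add_smul_atTop {w : Fin d → ℝ} {i : Fin N}
    (hi : y i * dot w (x i) < 0) (u : Fin d → ℝ) :
    Tendsto (fun t : ℝ => logisticRisk x y (u + t • w)) atTop atTop := by
  refine tendsto_atTop_mono (fun t => ?_)
    (tendsto_logisticLoss_atBot.comp (tendsto_const_add_mul_atBot (y i * dot u (x i)) hi))
  rw [logisticRisk_eq_sum, Function.comp_apply, ← margin_add_smul]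
  exact Finset.single_le_sum (f := fun j => logisticLoss (y j * dot (u + t • w) (x j)))
    (fun j _ => (logisticLoss_pos _).le) (Finset.mem_univ i)

lemma OptimalDirection.margin_nonneg {v : Fin d → ℝ} (hv : OptimalDirection x y v) (i : Fin N) :
    0 ≤ y i * dot v (x i) := by
  obtain ⟨u, hu⟩ := hv
  by_contra! hi
  exact not_tendsto_atTop_of_tendsto_nhds hu (tendsto_logisticRisk_add_smul_atTop x y hi u)

lemma margin_eq_zero_of_notMem_LSset {w : Fin d → ℝ} (hw : ∀ j, 0 ≤ y j * dot w (x j))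
    {i : Fin N} (hi : i ∉ LSset x y) : y i * dot w (x i) = 0 :=
  of_not_not fun h => hi ⟨w, lt_of_le_of_ne (hw i) (Ne.symm h), hw⟩

lemma exists_separator : ∃ u₀ : Fin d → ℝ, (∀ j, 0 ≤ y j * dot u₀ (x j)) ∧
    ∀ i ∈ LSset x y, 0 < y i * dot u₀ (x i) := by
  classical
  choose! g hg_pos hg_nonneg using fun i (h : i ∈ LSset x y) => h
  set S := Finset.univ.filter (· ∈ LSset x y)
  have hsum (j : Fin N) : y j * dot (∑ i ∈ S, g i) (x j) = ∑ i ∈ S, y j * dot (g i) (x j) := by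
    rw [dot_eq_dotProduct, sum_dotProduct, Finset.mul_sum]
    rfl
  refine ⟨∑ i ∈ S, g i, fun j => ?_, fun i hi => ?_⟩
  · rw [hsum]
    exact Finset.sum_nonneg fun k hk => hg_nonneg k (Finset.mem_filter.mp hk).2 j
  · rw [hsum]
    exact Finset.sum_pos' (fun k hk => hg_nonneg k (Finset.mem_filter.mp hk).2 i)
      ⟨i, Finset.mem_filter.mpr ⟨Finset.mem_univ i, hi⟩, hg_pos i hi⟩

end Dataset

lemma dot_eq_zero_of_mem_span {d : ℕ} {v : Fin d → ℝ} {s : Set (Fin d → ℝ)}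
    (hs : ∀ w ∈ s, dot v w = 0) : ∀ w ∈ Submodule.span ℝ s, dot v w = 0 := fun _ hw =>
  Submodule.span_le (p := LinearMap.ker (dotProductBilin ℝ ℝ v)) |>.mpr hs hw

/-- If `v` is an optimal direction for the logistic risk of a binary
dataset, then `v` is orthogonal to the span of the `S^SC` features, and strictly separates
every point of `S^LS`. -/
theorem statement4 (d N : ℕ) (x : Fin N → Fin d → ℝ) (y : Fin N → ℝ)
    (hy : ∀ i, y i = 1 ∨ y i = -1) (v : Fin d → ℝ)
    (hv : OptimalDirection x y v) :
    (∀ w ∈ Submodule.span ℝ {w : Fin d → ℝ | ∃ i, i ∉ LSset x y ∧ w = x i}, dot v w = 0) ∧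
    (∀ i ∈ LSset x y, 0 < y i * dot v (x i)) := by
  have hv_nonneg := hv.margin_nonneg
  refine ⟨dot_eq_zero_of_mem_span ?_, fun i hi => ?_⟩
  · rintro _ ⟨i, hi, rfl⟩
    have hyi : y i ≠ 0 := by rcases hy i with h | h <;> simp [h]
    exact (mul_eq_zero.mp (margin_eq_zero_of_notMem_LSset x y hv_nonneg hi)).resolve_left hyi
  refine lt_of_le_of_ne (hv_nonneg i) fun hzero => ?_
  obtain ⟨u, hu⟩ := hv
  obtain ⟨u₀, hu₀_nonneg, hu₀_pos⟩ := exists_separator x y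
  have hsubset : zeroMargins x y u₀ ⊆ zeroMargins x y v := fun j hj => by
    simp only [zeroMargins, Finset.mem_filter] at hj ⊢
    exact ⟨hj.1, margin_eq_zero_of_notMem_LSset x y hv_nonneg
      fun hjLS => (hu₀_pos j hjLS).ne' hj.2⟩
  have hlt := Finset.sum_lt_sum_of_subset (f := fun j => logisticLoss (y j * dot u (x j)))
    hsubset (i := i) (Finset.mem_filter.mpr ⟨Finset.mem_univ i, hzero.symm⟩)
    (by simp only [zeroMargins, Finset.mem_filter]; exact fun h => (hu₀_pos i hi).ne' h.2)
    (logisticLoss_pos _) fun j _ _ => (logisticLoss_pos _).le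
  have hle : ⨅ w, logisticRisk x y w ≤ ∑ j ∈ zeroMargins x y u₀, logisticLoss (y j * dot u (x j)) :=
    ge_of_tendsto' (tendsto_logisticRisk_add_smul x y hu₀_nonneg u)
      fun t => ciInf_le (bddBelow_range_logisticRisk x y) _
  rw [tendsto_nhds_unique hu (tendsto_logisticRisk_add_smul x y hv_nonneg u)] at hle
  exact hle.not_gt hlt

end SGDBN4
end

section
/- Let Z = {(x_i, y_i)}_{i=1}^N ⊂ ℝ^d × {−1,+1} be such that (1) the columns x_1,…,x_N affinely span a d-dimensional set (i.e., the convex hull of the features has nonempty interior in ℝ^d), and (2) the relative interior of the convex hull of the positive features intersects the relative interior of the convex hull of the negative features. Then Z is SC: every v ∈ ℝ^d satisfying y_i⟨v, x_i⟩ ≥ 0 for all i must be v = 0; equivalently, the maximal linearly separable subset S^LS of Z is empty. -/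
namespace SGDBN8

/-- Euclidean inner product on `Fin d → ℝ`. -/
noncomputable def dot {d : ℕ} (u v : Fin d → ℝ) : ℝ := ∑ k, u k * v k

/-- The (index set of the) maximal linearly separable subset `S^LS`. -/
def LSset {d N : ℕ} (x : Fin N → Fin d → ℝ) (y : Fin N → ℝ) : Set (Fin N) :=
  {i | ∃ u : Fin d → ℝ, 0 < y i * dot u (x i) ∧ ∀ j, 0 ≤ y j * dot u (x j)}

/-- If a linear functional is nonnegative on `s` and vanishes at a point of the
intrinsic (relative) interior of `s`, then it vanishes on all of `s`. -/
lemma key {d : ℕ} {s : Set (Fin d → ℝ)} {p z : Fin d → ℝ}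
    (hz : z ∈ s) (hp : p ∈ intrinsicInterior ℝ s) (f : (Fin d → ℝ) →ₗ[ℝ] ℝ)
    (hnn : ∀ w ∈ s, 0 ≤ f w) (hfp : f p = 0) : f z = 0 := by
  obtain ⟨p', hp', hpc⟩ := mem_intrinsicInterior.mp hp
  rw [mem_interior_iff_mem_nhds, nhds_subtype_eq_comap, Filter.mem_comap] at hp'
  obtain ⟨T, hT, hTs⟩ := hp'
  rw [hpc] at hT
  -- the curve γ t = lineMap z p (1 + t)
  set γ : ℝ → (Fin d → ℝ) := fun t => (1 + t) • (p - z) + z with hγ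
  have hγ0 : γ 0 = p := by simp [hγ]
  have hcont : Continuous γ :=
    (((continuous_const.add continuous_id).smul continuous_const).add continuous_const)
  have htend : Filter.Tendsto γ (nhdsWithin 0 (Set.Ioi 0)) (nhds p) := by
    have := hcont.tendsto 0
    rw [hγ0] at this
    exact this.mono_left nhdsWithin_le_nhds
  have hev : ∀ᶠ t in nhdsWithin 0 (Set.Ioi 0), γ t ∈ T ∧ 0 < t := by
    refine (htend.eventually_mem hT).and ?_
    exact eventually_mem_nhdsWithin
  obtain ⟨t, hγT, ht⟩ := hev.exists
  -- γ t is in the affine span of s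
  have hpmem : p ∈ affineSpan ℝ s := hpc ▸ p'.2
  have hzmem : z ∈ affineSpan ℝ s := subset_affineSpan ℝ s hz
  have hspan : γ t ∈ affineSpan ℝ s := by
    have heq : γ t = AffineMap.lineMap z p (1 + t) := by
      simp [hγ, AffineMap.lineMap_apply]
    rw [heq]
    exact AffineMap.lineMap_mem (k := ℝ) (1 + t) hzmem hpmem
  have hγs : γ t ∈ s := hTs (a := ⟨γ t, hspan⟩) hγT
  have h1 : 0 ≤ f (γ t) := hnn _ hγs
  have h2 : f (γ t) = -(t * f z) := by
    simp [hγ, map_add, map_smul, map_sub, hfp]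
    ring
  have hle : f z ≤ 0 := by nlinarith
  exact le_antisymm hle (hnn _ hz)

/-- If the features are full dimensional and the relative interiors of the
convex hulls of the positive and negative features intersect, then the dataset is SC:
every `v` with `y_i⟨v,x_i⟩ ≥ 0` for all `i` is `0`, and `S^LS = ∅`. -/
theorem statement8 (d N : ℕ) (x : Fin N → Fin d → ℝ) (y : Fin N → ℝ)
    (hy : ∀ i, y i = 1 ∨ y i = -1)
    (hfull : (interior (convexHull ℝ (Set.range x))).Nonempty)
    (hint : (intrinsicInterior ℝ (convexHull ℝ {w : Fin d → ℝ | ∃ i, y i = 1 ∧ w = x i}) ∩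
        intrinsicInterior ℝ
          (convexHull ℝ {w : Fin d → ℝ | ∃ i, y i = -1 ∧ w = x i})).Nonempty) :
    (∀ v : Fin d → ℝ, (∀ i, 0 ≤ y i * dot v (x i)) → v = 0) ∧
    LSset x y = ∅ := by
  have main : ∀ v : Fin d → ℝ, (∀ i, 0 ≤ y i * dot v (x i)) → v = 0 := by
    intro v hv
    set f : (Fin d → ℝ) →ₗ[ℝ] ℝ :=
      { toFun := fun w => dot v w
        map_add' := by intro a b; simp [dot, mul_add, Finset.sum_add_distrib]
        map_smul' := by
          intro c a
          simp [dot, Finset.mul_sum]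
          exact Finset.sum_congr rfl fun k _ => by ring } with hf
    obtain ⟨p, hp1, hp2⟩ := hint
    set P := {w : Fin d → ℝ | ∃ i, y i = 1 ∧ w = x i}
    set Q := {w : Fin d → ℝ | ∃ i, y i = -1 ∧ w = x i}
    have hfP : ∀ w ∈ convexHull ℝ P, 0 ≤ f w := by
      intro w hw
      have : convexHull ℝ P ⊆ {w | 0 ≤ f w} := by
        apply convexHull_min
        · rintro w ⟨i, hyi, rfl⟩
          have := hv i; rw [hyi, one_mul] at this; exact this
        · intro a ha b hb s t hs ht hst
          simp only [Set.mem_setOf_eq, map_add, map_smul, smul_eq_mul] at *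
          positivity
      exact this hw
    have hfQ : ∀ w ∈ convexHull ℝ Q, 0 ≤ (-f) w := by
      intro w hw
      have : convexHull ℝ Q ⊆ {w | 0 ≤ (-f) w} := by
        apply convexHull_min
        · rintro w ⟨i, hyi, rfl⟩
          have := hv i; rw [hyi] at this
          simp only [LinearMap.neg_apply, Set.mem_setOf_eq]
          have hfe : f (x i) = dot v (x i) := rfl
          linarith
        · intro a ha b hb s t hs ht hst
          simp only [Set.mem_setOf_eq, map_add, map_smul, smul_eq_mul,
            LinearMap.neg_apply, map_add] at *
          nlinarith
      exact this hw
    have hpP : p ∈ convexHull ℝ P := intrinsicInterior_subset hp1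
    have hpQ : p ∈ convexHull ℝ Q := intrinsicInterior_subset hp2
    have hfp : f p = 0 :=
      le_antisymm (by have := hfQ p hpQ; simp at this; linarith) (hfP p hpP)
    -- f vanishes on both hulls, hence at every x i
    have hxi : ∀ i, f (x i) = 0 := by
      intro i
      rcases hy i with h | h
      · exact key (subset_convexHull ℝ P ⟨i, h, rfl⟩) hp1 f hfP hfp
      · have := key (subset_convexHull ℝ Q ⟨i, h, rfl⟩) hp2 (-f) hfQ (by simp [hfp])
        simpa using this
    -- full dimensionality: affine span of range x is top
    have hconv : Convex ℝ (convexHull ℝ (Set.range x)) := convex_convexHull ℝ _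
    have htop : affineSpan ℝ (Set.range x) = ⊤ := by
      have := hconv.interior_nonempty_iff_affineSpan_eq_top.mp hfull
      rwa [affineSpan_convexHull] at this
    -- range x ⊆ ker f, so affineSpan ≤ ker f as affine subspace
    have hker : affineSpan ℝ (Set.range x) ≤ (LinearMap.ker f).toAffineSubspace := by
      apply affineSpan_le.mpr
      rintro w ⟨i, rfl⟩
      exact hxi i
    have hvker : v ∈ LinearMap.ker f := by
      have : v ∈ affineSpan ℝ (Set.range x) := htop ▸ AffineSubspace.mem_top ℝ _ v
      exact hker this
    have hfv : f v = 0 := hvker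
    have : dot v v = 0 := hfv
    -- dot v v = ∑ v k ^2
    funext k
    have hsum : ∑ j, v j * v j = 0 := this
    have : v k * v k = 0 := by
      have hnn' : ∀ j ∈ Finset.univ, 0 ≤ v j * v j := fun j _ => mul_self_nonneg _
      have := (Finset.sum_eq_zero_iff_of_nonneg hnn').mp hsum k (Finset.mem_univ k)
      exact this
    have := mul_self_eq_zero.mp this
    simpa using this
  refine ⟨main, ?_⟩
  ext i
  simp only [LSset, Set.mem_setOf_eq, Set.mem_empty_iff_false, iff_false]
  rintro ⟨u, hu1, hu2⟩
  have := main u hu2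
  subst this
  simp [dot] at hu1

end SGDBN8
end

section
/- Let K ≥ 1 and n ≥ 1, and consider Kn items carrying labels in {1,…,K} with exactly n items per label. Let B ≥ 1 divide Kn, draw a permutation of the Kn items uniformly at random, and partition the permuted items into Kn/B consecutive batches of size B. Let T be the number of monochromatic batches (batches whose items all share the same label). Then E[T] = (K²n/B)·C(n,B)/C(Kn,B), and for every ε > 0, P(|T − E[T]| ≥ ε) ≤ 2·exp(−B·ε²/(2nK³)). -/
/-!
Write `T = ∑ c, N (S c)`, where `S c` is the set of positions receiving label `c` and `N S`
counts the batches contained in `S`. Under a uniform permutation each `S c` is a uniform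
`n`-subset of the `Kn` positions, and a fixed batch lies in it with probability
`C(n, B) / C(Kn, B)`; this gives `E[T]`.

For the tail bound, the batch indicators of a uniform `n`-subset are negatively associated:
conditioned on `#(S ∩ A)`, the parts `S ∩ A` and `S \ A` are independent uniform subsets, and
Chebyshev's sum inequality over the level `#(S ∩ A)` gives `E[f g] ≤ E[f] E[g]` for monotone `f`
of `S ∩ A` and `g` of `S \ A`. So the moment generating function of `N S - E[N]` is at most that
of `Kn/B` independent centred Bernoulli variables, hence at most `exp ((Kn/B) t² / 2)`. Jensen's
inequality over the `K` labels bounds `E[exp (t (T - E[T]))]` by `exp (K² (Kn/B) t² / 2)`, and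
Chernoff's bound with `t = ε / (K² (Kn/B))` yields `2 exp (-B ε² / (2 n K³))`.
-/

namespace SGDBN10

/-- Batch `j` of the permutation `π` is monochromatic for the labels `label`. -/
def MonoBatch {m : ℕ} (B : ℕ) {K : ℕ} (label : Fin m → Fin K) (π : Equiv.Perm (Fin m))
    (j : ℕ) : Prop :=
  ∀ i₁ i₂ : Fin m, (i₁ : ℕ) / B = j → (i₂ : ℕ) / B = j → label (π i₁) = label (π i₂)

instance {m : ℕ} (B : ℕ) {K : ℕ} (label : Fin m → Fin K) (π : Equiv.Perm (Fin m)) (j : ℕ) :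
    Decidable (MonoBatch B label π j) := by
  unfold MonoBatch; infer_instance

/-- Number of monochromatic batches of the permutation `π`. -/
noncomputable def numMono {m : ℕ} (B : ℕ) {K : ℕ} (label : Fin m → Fin K)
    (π : Equiv.Perm (Fin m)) : ℕ :=
  ((Finset.range (m / B)).filter (fun j => MonoBatch B label π j)).card

/-- Expected number of monochromatic batches under a uniformly random permutation. -/
noncomputable def expMono {m : ℕ} (B : ℕ) {K : ℕ} (label : Fin m → Fin K) : ℝ :=
  (∑ π : Equiv.Perm (Fin m), (numMono B label π : ℝ)) /
    (Fintype.card (Equiv.Perm (Fin m)) : ℝ)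

open Finset
open scoped Pointwise BigOperators

section

open Real

lemma sum_mul_mul_sum_le_of_antivaryOn_support {ι : Type*} (s : Finset ι) {w φ ψ : ι → ℝ}
    (hw : ∀ i ∈ s, 0 ≤ w i)
    (hφψ : ∀ i ∈ s, ∀ j ∈ s, 0 < w i → 0 < w j → (φ i - φ j) * (ψ i - ψ j) ≤ 0) :
    (∑ i ∈ s, w i * (φ i * ψ i)) * ∑ i ∈ s, w i ≤
      (∑ i ∈ s, w i * φ i) * ∑ i ∈ s, w i * ψ i := by
  have hterm : ∀ i ∈ s, ∀ j ∈ s, 0 ≤ w i * w j * -((φ i - φ j) * (ψ i - ψ j)) := by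
    intro i hi j hj
    rcases (hw i hi).eq_or_lt with hi0 | hi0
    · simp [← hi0]
    rcases (hw j hj).eq_or_lt with hj0 | hj0
    · simp [← hj0]
    exact mul_nonneg (by positivity) (neg_nonneg.mpr (hφψ i hi j hj hi0 hj0))
  have hexpand : ∑ i ∈ s, ∑ j ∈ s, w i * w j * -((φ i - φ j) * (ψ i - ψ j)) =
      (∑ i ∈ s, w i * φ i) * (∑ i ∈ s, w i * ψ i) + (∑ i ∈ s, w i * ψ i) * (∑ i ∈ s, w i * φ i) -
        (∑ i ∈ s, w i * (φ i * ψ i)) * (∑ i ∈ s, w i) -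
        (∑ i ∈ s, w i) * ∑ i ∈ s, w i * (φ i * ψ i) := by
    simp only [sum_mul_sum, ← sum_add_distrib, ← sum_sub_distrib]
    exact sum_congr rfl fun i _ => sum_congr rfl fun j _ => by ring
  nlinarith [sum_nonneg fun i hi => sum_nonneg fun j hj => hterm i hi j hj]

lemma exp_mul_le_cosh_add_mul_sinh {x : ℝ} (hx₁ : -1 ≤ x) (hx₂ : x ≤ 1) (t : ℝ) :
    exp (t * x) ≤ cosh t + x * sinh t := by
  have h := convexOn_exp.2 (Set.mem_univ (-t)) (Set.mem_univ t)
    (by linarith : 0 ≤ (1 - x) / 2) (by linarith : 0 ≤ (1 + x) / 2) (by ring)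
  simp only [smul_eq_mul] at h
  rw [show (1 - x) / 2 * -t + (1 + x) / 2 * t = t * x by ring] at h
  rw [cosh_eq, sinh_eq]
  linarith

lemma one_sub_add_mul_exp_le {q : ℝ} (hq₀ : 0 ≤ q) (hq₁ : q ≤ 1) (t : ℝ) :
    1 - q + q * exp t ≤ exp (t * q + t ^ 2 / 2) := by
  have hconvex : (1 - q) * exp (t * -q) + q * exp (t * (1 - q)) ≤ cosh t := by
    nlinarith [exp_mul_le_cosh_add_mul_sinh (x := -q) (by linarith) (by linarith) t,
      exp_mul_le_cosh_add_mul_sinh (x := 1 - q) (by linarith) (by linarith) t]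
  have e₁ : exp (t * q) * exp (t * -q) = 1 := by rw [← exp_add]; simp
  have e₂ : exp (t * q) * exp (t * (1 - q)) = exp t := by rw [← exp_add]; ring_nf
  calc 1 - q + q * exp t = exp (t * q) * ((1 - q) * exp (t * -q) + q * exp (t * (1 - q))) := by
        linear_combination (q - 1) * e₁ - q * e₂
    _ ≤ exp (t * q) * exp (t ^ 2 / 2) :=
        mul_le_mul_of_nonneg_left (hconvex.trans (cosh_le_exp_half_sq t)) (exp_pos _).le
    _ = exp (t * q + t ^ 2 / 2) := (exp_add _ _).symm

lemma expect_exp_mul_ite_le {β : Type*} {P : Finset β} (hP : P.Nonempty) (p : β → Prop)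
    [DecidablePred p] (t : ℝ) :
    𝔼 x ∈ P, exp (t * if p x then 1 else 0) ≤
      exp (t * 𝔼 x ∈ P, (if p x then 1 else 0 : ℝ) + t ^ 2 / 2) := by
  have hlin : ∀ x, exp (t * if p x then 1 else 0) = 1 + (exp t - 1) * if p x then 1 else 0 :=
    fun x => by split_ifs <;> simp
  have hq₀ : 0 ≤ 𝔼 x ∈ P, (if p x then 1 else 0 : ℝ) := expect_nonneg fun x _ => by positivity
  have hq₁ : 𝔼 x ∈ P, (if p x then 1 else 0 : ℝ) ≤ 1 :=
    expect_le hP fun x _ => by split_ifs <;> norm_num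
  simp only [hlin, expect_add_distrib, expect_const hP, ← mul_expect]
  linarith [one_sub_add_mul_exp_le hq₀ hq₁ t]

lemma exp_sum_le_expect_exp {κ : Type*} [Fintype κ] [Nonempty κ] (y : κ → ℝ) :
    exp (∑ c, y c) ≤ 𝔼 c, exp (Fintype.card κ * y c) := by
  have hN : (0 : ℝ) < Fintype.card κ := by exact_mod_cast Fintype.card_pos
  have h := convexOn_exp.map_sum_le (t := univ) (w := fun _ => (Fintype.card κ : ℝ)⁻¹)
    (p := fun c => Fintype.card κ * y c) (fun _ _ => by positivity)
    (by simp [card_univ, hN.ne']) (fun _ _ => Set.mem_univ _)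
  simp only [smul_eq_mul, inv_mul_cancel_left₀ hN.ne', ← mul_sum] at h
  rwa [Fintype.expect_eq_sum_div_card, div_eq_inv_mul]

lemma card_ge_div_card_le_of_expect_exp_le {Ω : Type*} [Fintype Ω] (Y : Ω → ℝ) {c ε : ℝ}
    (hc : 0 < c) (hε : 0 ≤ ε) (hY : ∀ t, 0 ≤ t → 𝔼 ω, exp (t * Y ω) ≤ exp (c * t ^ 2 / 2)) :
    (#{ω | ε ≤ Y ω} : ℝ) / Fintype.card Ω ≤ exp (-ε ^ 2 / (2 * c)) := by
  set t := ε / c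
  have ht : 0 ≤ t := by positivity
  have hmarkov : (#{ω | ε ≤ Y ω} : ℝ) * exp (t * ε) ≤ ∑ ω, exp (t * Y ω) := by
    rw [← nsmul_eq_mul, ← sum_const]
    refine (sum_le_sum fun ω hω => exp_le_exp.mpr (mul_le_mul_of_nonneg_left (mem_filter.mp hω).2
      ht)).trans (sum_le_sum_of_subset_of_nonneg (filter_subset _ _) fun _ _ _ => (exp_pos _).le)
  rcases (Nat.cast_nonneg (α := ℝ) (Fintype.card Ω)).eq_or_lt with hΩ | hΩ
  · rw [← hΩ, div_zero]; positivity
  rw [← Fintype.card_mul_expect] at hmarkov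
  have hexponent : -ε ^ 2 / (2 * c) = c * t ^ 2 / 2 - t * ε := by
    simp only [t]; field_simp; ring
  rw [div_le_iff₀ hΩ, hexponent, exp_sub, div_mul_eq_mul_div, le_div_iff₀ (exp_pos _)]
  nlinarith [mul_le_mul_of_nonneg_left (hY t ht) hΩ.le]

lemma card_abs_ge_div_card_le_of_expect_exp_le {Ω : Type*} [Fintype Ω] (Y : Ω → ℝ) {c ε : ℝ}
    (hc : 0 < c) (hε : 0 ≤ ε) (hY : ∀ t, 𝔼 ω, exp (t * Y ω) ≤ exp (c * t ^ 2 / 2)) :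
    (#{ω | ε ≤ |Y ω|} : ℝ) / Fintype.card Ω ≤ 2 * exp (-ε ^ 2 / (2 * c)) := by
  classical
  have hunion : (#{ω | ε ≤ |Y ω|} : ℝ) ≤ #{ω | ε ≤ Y ω} + #{ω | ε ≤ -Y ω} := by
    norm_cast
    refine (card_le_card fun ω hω => ?_).trans (card_union_le _ _)
    simp only [mem_filter, mem_union, mem_univ, true_and, le_abs'] at hω ⊢
    rcases hω with h | h
    · exact .inr (by linarith)
    · exact .inl h
  have hupper := card_ge_div_card_le_of_expect_exp_le Y hc hε fun t _ => hY t
  have hlower := card_ge_div_card_le_of_expect_exp_le (fun ω => -Y ω) hc hε fun t _ => by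
    simpa only [mul_neg, neg_mul, neg_sq] using hY (-t)
  calc (#{ω | ε ≤ |Y ω|} : ℝ) / Fintype.card Ω
      ≤ #{ω | ε ≤ Y ω} / Fintype.card Ω + #{ω | ε ≤ -Y ω} / Fintype.card Ω := by
        rw [← add_div]; exact div_le_div_of_nonneg_right hunion (Nat.cast_nonneg _)
    _ ≤ 2 * exp (-ε ^ 2 / (2 * c)) := by linarith

lemma expect_smul_eq_expect_of_isPretransitive {G X M : Type*} [Group G] [Fintype G]
    [MulAction G X] [Fintype X] [MulAction.IsPretransitive G X] [AddCommMonoid M] [Module ℚ≥0 M]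
    (F : X → M) (x₀ : X) :
    𝔼 g : G, F (g • x₀) = 𝔼 x, F x := by
  have : Nonempty X := ⟨x₀⟩
  have hconst : ∀ x, 𝔼 g : G, F (g • x) = 𝔼 g : G, F (g • x₀) := by
    intro x
    obtain ⟨h, rfl⟩ := MulAction.exists_smul_eq G x₀ x
    exact Fintype.expect_equiv (Equiv.mulRight h) _ _ fun g => by simp [mul_smul]
  have htranslate : ∀ g : G, 𝔼 x, F (g • x) = 𝔼 x, F x := fun g =>
    Fintype.expect_equiv (MulAction.toPerm g) _ _ fun _ => rfl
  calc 𝔼 g : G, F (g • x₀) = 𝔼 x, 𝔼 g : G, F (g • x) := by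
        simp only [hconst, Fintype.expect_const]
    _ = 𝔼 g : G, 𝔼 x, F (g • x) := expect_comm _ _ _
    _ = 𝔼 x, F x := by simp only [htranslate, Fintype.expect_const]

lemma card_filter_forall_mem_eq {ι κ : Type*} [Fintype κ] [DecidableEq κ] {D : Finset ι}
    (hD : D.Nonempty) (col : ι → κ) :
    #{c | ∀ i ∈ D, col i = c} = if ∀ i ∈ D, ∀ i' ∈ D, col i = col i' then 1 else 0 := by
  obtain ⟨i₀, hi₀⟩ := hD
  split_ifs with h
  · refine card_eq_one.mpr ⟨col i₀, ext fun c => ?_⟩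
    simp only [mem_filter, mem_univ, true_and, mem_singleton]
    exact ⟨fun hc => (hc i₀ hi₀).symm, fun hc i hi => hc ▸ h i hi i₀ hi₀⟩
  · rw [card_eq_zero, filter_eq_empty_iff]
    exact fun c _ hc => h fun i hi i' hi' => (hc i hi).trans (hc i' hi').symm

section UniformSubsets

variable {α : Type*} [DecidableEq α]

lemma card_sub_mul_sum_powersetCard_le (W : Finset α) {f : Finset α → ℝ} (hf : Monotone f)
    (k : ℕ) :
    ((#W - k : ℕ) : ℝ) * ∑ U ∈ powersetCard k W, f U ≤
      (k + 1) * ∑ T ∈ powersetCard (k + 1) W, f T := by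
  have habove : ∀ U ∈ powersetCard k W,
      #(bipartiteAbove (· ⊆ ·) (powersetCard (k + 1) W) U) = #W - k := fun U hU => by
    obtain ⟨hUW, hU⟩ := mem_powersetCard.mp hU
    rw [bipartiteAbove, card_filter_powersetCard_subset U W _ hUW (by omega), hU,
      Nat.add_sub_cancel_left, Nat.choose_one_right]
  have hbelow : ∀ T ∈ powersetCard (k + 1) W,
      #(bipartiteBelow (· ⊆ ·) (powersetCard k W) T) = k + 1 := fun T hT => by
    obtain ⟨hTW, hT⟩ := mem_powersetCard.mp hT
    have : bipartiteBelow (· ⊆ ·) (powersetCard k W) T = powersetCard k T := by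
      ext U
      simp only [bipartiteBelow, mem_filter, mem_powersetCard]
      exact ⟨fun h => ⟨h.2, h.1.2⟩, fun h => ⟨⟨h.1.trans hTW, h.2⟩, h.1⟩⟩
    rw [this, card_powersetCard, hT, Nat.choose_succ_self_right]
  calc ((#W - k : ℕ) : ℝ) * ∑ U ∈ powersetCard k W, f U
      = ∑ U ∈ powersetCard k W, ∑ _T ∈ bipartiteAbove (· ⊆ ·) (powersetCard (k + 1) W) U, f U := by
        rw [mul_sum]
        exact sum_congr rfl fun U hU => by rw [sum_const, habove U hU, nsmul_eq_mul]
    _ ≤ ∑ U ∈ powersetCard k W, ∑ T ∈ bipartiteAbove (· ⊆ ·) (powersetCard (k + 1) W) U, f T :=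
        sum_le_sum fun U _ => sum_le_sum fun T hT => hf (mem_filter.mp hT).2
    _ = ∑ T ∈ powersetCard (k + 1) W, ∑ _U ∈ bipartiteBelow (· ⊆ ·) (powersetCard k W) T, f T :=
        sum_sum_bipartiteAbove_eq_sum_sum_bipartiteBelow _ _
    _ = (k + 1) * ∑ T ∈ powersetCard (k + 1) W, f T := by
        rw [mul_sum]
        refine sum_congr rfl fun T hT => ?_
        rw [sum_const, hbelow T hT, nsmul_eq_mul]
        push_cast
        ring

lemma expect_powersetCard_mono (W : Finset α) {f : Finset α → ℝ} (hf : Monotone f) {k l : ℕ}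
    (hkl : k ≤ l) (hl : l ≤ #W) :
    𝔼 U ∈ powersetCard k W, f U ≤ 𝔼 U ∈ powersetCard l W, f U := by
  induction l, hkl using Nat.le_induction with
  | base => exact le_rfl
  | succ l hkl ih =>
    refine (ih (by omega)).trans ?_
    have hC : (0 : ℝ) < (#W).choose l := by exact_mod_cast Nat.choose_pos (by omega)
    have hC' : (0 : ℝ) < (#W).choose (l + 1) := by exact_mod_cast Nat.choose_pos hl
    have hpascal : ((#W).choose (l + 1) : ℝ) * (l + 1) = (#W).choose l * ((#W - l : ℕ) : ℝ) := by
      exact_mod_cast Nat.choose_succ_right_eq (#W) l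
    have hstep := card_sub_mul_sum_powersetCard_le W hf l
    rw [expect_eq_sum_div_card, expect_eq_sum_div_card, card_powersetCard, card_powersetCard,
      div_le_div_iff₀ hC hC']
    refine le_of_mul_le_mul_right ?_ (by positivity : (0 : ℝ) < l + 1)
    calc (∑ U ∈ powersetCard l W, f U) * (#W).choose (l + 1) * (l + 1)
        = (#W).choose l * ((#W - l : ℕ) * ∑ U ∈ powersetCard l W, f U) := by
          rw [mul_assoc, hpascal]; ring
      _ ≤ (#W).choose l * ((l + 1) * ∑ T ∈ powersetCard (l + 1) W, f T) :=
          mul_le_mul_of_nonneg_left hstep hC.le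
      _ = _ := by ring

variable [Fintype α]

lemma sum_powersetCard_eq_sum_sum_inter_sdiff {M : Type*} [AddCommMonoid M] (A : Finset α)
    (n : ℕ) (F : Finset α → M) :
    ∑ S ∈ powersetCard n univ, F S =
      ∑ h ∈ range (n + 1), ∑ U ∈ powersetCard h A, ∑ V ∈ powersetCard (n - h) Aᶜ, F (U ∪ V) := by
  have hlevel : ∀ S ∈ powersetCard n univ, #(S ∩ A) ∈ range (n + 1) := fun S hS => by
    rw [mem_range, Nat.lt_succ_iff, ← (mem_powersetCard.mp hS).2]
    exact card_le_card inter_subset_left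
  have hsplit : ∀ S : Finset α, S ∩ A ∪ S \ A = S := fun S => by rw [union_comm, sdiff_union_inter]
  rw [← sum_fiberwise_of_maps_to hlevel]
  refine sum_congr rfl fun h hh => ?_
  rw [← sum_product']
  refine sum_nbij' (fun S => (S ∩ A, S \ A)) (fun p => p.1 ∪ p.2) ?_ ?_ (fun S _ => hsplit S) ?_
    (fun S _ => by rw [hsplit])
  · intro S hS
    simp only [mem_filter, mem_powersetCard, mem_product] at hS ⊢
    have := card_inter_add_card_sdiff S A
    refine ⟨⟨inter_subset_right, hS.2⟩, fun x hx => mem_compl.mpr (mem_sdiff.mp hx).2, ?_⟩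
    omega
  · rintro ⟨U, V⟩ hUV
    simp only [mem_powersetCard, mem_product] at hUV
    obtain ⟨⟨hUA, hU⟩, hVA, hV⟩ := hUV
    have hUVA : (U ∪ V) ∩ A = U := by grind [mem_compl]
    simp only [mem_filter, mem_powersetCard, subset_univ, true_and, hUVA]
    rw [card_union_of_disjoint (disjoint_of_subset_left hUA (disjoint_of_subset_right hVA
      disjoint_compl_right)), hU, hV]
    simp only [mem_range] at hh
    omega
  · rintro ⟨U, V⟩ hUV
    simp only [mem_powersetCard, mem_product] at hUV
    obtain ⟨⟨hUA, -⟩, hVA, -⟩ := hUV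
    simp only [Prod.mk.injEq]
    grind [mem_compl]

lemma sum_powersetCard_mul_eq_sum_mul_sum (A : Finset α) (n : ℕ) (u v : Finset α → ℝ) :
    ∑ S ∈ powersetCard n univ, u (S ∩ A) * v (S \ A) =
      ∑ h ∈ range (n + 1), (∑ U ∈ powersetCard h A, u U) * ∑ V ∈ powersetCard (n - h) Aᶜ, v V := by
  rw [sum_powersetCard_eq_sum_sum_inter_sdiff A]
  refine sum_congr rfl fun h _ => ?_
  rw [sum_mul_sum]
  refine sum_congr rfl fun U hU => sum_congr rfl fun V hV => ?_
  rw [mem_powersetCard] at hU hV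
  rw [show (U ∪ V) ∩ A = U by grind [mem_compl], show (U ∪ V) \ A = V by grind [mem_compl]]

lemma sum_mul_mul_card_le_sum_mul_sum_of_monotone (A : Finset α) (n : ℕ)
    {f g : Finset α → ℝ} (hf : Monotone f) (hg : Monotone g)
    (hfA : ∀ S, f (S ∩ A) = f S) (hgA : ∀ S, g (S \ A) = g S) :
    (∑ S ∈ powersetCard n univ, f S * g S) * #(powersetCard n (univ : Finset α)) ≤
      (∑ S ∈ powersetCard n univ, f S) * ∑ S ∈ powersetCard n univ, g S := by
  -- Level `h = #(S ∩ A)` carries weight `a h * b h`; on it `S ∩ A` and `S \ A` are independent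
  -- uniform subsets of `A` and `Aᶜ`, and `φ h`, `ψ h` are the conditional means of `f` and `g`.
  set a : ℕ → ℝ := fun h => (#A).choose h
  set b : ℕ → ℝ := fun h => (#Aᶜ).choose (n - h)
  set φ : ℕ → ℝ := fun h => 𝔼 U ∈ powersetCard h A, f U
  set ψ : ℕ → ℝ := fun h => 𝔼 V ∈ powersetCard (n - h) Aᶜ, g V
  have hφ : ∀ h, ∑ U ∈ powersetCard h A, f U = a h * φ h := fun h => by
    rw [← card_mul_expect, card_powersetCard]
  have hψ : ∀ h, ∑ V ∈ powersetCard (n - h) Aᶜ, g V = b h * ψ h := fun h => by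
    rw [← card_mul_expect, card_powersetCard]
  have ha : ∀ h, ∑ _U ∈ powersetCard h A, (1 : ℝ) = a h := fun h => by simp [a]
  have hb : ∀ h, ∑ _V ∈ powersetCard (n - h) Aᶜ, (1 : ℝ) = b h := fun h => by simp [b]
  have hsum_fg := sum_powersetCard_mul_eq_sum_mul_sum A n f g
  have hsum_f := sum_powersetCard_mul_eq_sum_mul_sum A n f 1
  have hsum_g := sum_powersetCard_mul_eq_sum_mul_sum A n 1 g
  have hsum_one := sum_powersetCard_mul_eq_sum_mul_sum A n 1 1
  simp only [hfA, hgA, Pi.one_apply, mul_one, one_mul, hφ, hψ, ha, hb]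
    at hsum_fg hsum_f hsum_g hsum_one
  have hlevels : ∀ i j, i ≤ j → 0 < a i * b i → 0 < a j * b j → φ i ≤ φ j ∧ ψ j ≤ ψ i := by
    intro i j hij hi hj
    have hjA : j ≤ #A := by by_contra! h; simp [a, Nat.choose_eq_zero_of_lt h] at hj
    have hiA : n - i ≤ #Aᶜ := by by_contra! h; simp [b, Nat.choose_eq_zero_of_lt h] at hi
    exact ⟨expect_powersetCard_mono A hf hij hjA, expect_powersetCard_mono Aᶜ hg (by omega) hiA⟩
  calc (∑ S ∈ powersetCard n univ, f S * g S) * #(powersetCard n (univ : Finset α))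
      = (∑ h ∈ range (n + 1), a h * b h * (φ h * ψ h)) * ∑ h ∈ range (n + 1), a h * b h := by
        rw [card_eq_sum_ones, Nat.cast_sum, Nat.cast_one, hsum_one, hsum_fg]
        exact congrArg (· * _) (sum_congr rfl fun h _ => by ring)
    _ ≤ (∑ h ∈ range (n + 1), a h * b h * φ h) * ∑ h ∈ range (n + 1), a h * b h * ψ h := by
        refine sum_mul_mul_sum_le_of_antivaryOn_support _ (fun h _ => by positivity)
          fun i _ j _ hi hj => ?_
        rcases le_total i j with hij | hji
        · obtain ⟨h₁, h₂⟩ := hlevels i j hij hi hj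
          nlinarith
        · obtain ⟨h₁, h₂⟩ := hlevels j i hji hj hi
          nlinarith
    _ = (∑ S ∈ powersetCard n univ, f S) * ∑ S ∈ powersetCard n univ, g S := by
        rw [hsum_f, hsum_g]
        congr 1 <;> exact sum_congr rfl fun h _ => by ring

lemma expect_mul_le_expect_mul_expect_of_monotone (A : Finset α) (n : ℕ)
    {f g : Finset α → ℝ} (hf : Monotone f) (hg : Monotone g)
    (hfA : ∀ S, f (S ∩ A) = f S) (hgA : ∀ S, g (S \ A) = g S) :
    𝔼 S ∈ powersetCard n univ, f S * g S ≤
      (𝔼 S ∈ powersetCard n univ, f S) * 𝔼 S ∈ powersetCard n univ, g S := by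
  have h := sum_mul_mul_card_le_sum_mul_sum_of_monotone A n hf hg hfA hgA
  rw [expect_eq_sum_div_card, expect_eq_sum_div_card, expect_eq_sum_div_card, div_mul_div_comm]
  rcases (Nat.cast_nonneg (α := ℝ) #(powersetCard n (univ : Finset α))).eq_or_lt with hN | hN
  · rw [← hN, div_zero, mul_zero, div_zero]
  · rw [div_le_div_iff₀ hN (by positivity), ← mul_assoc]
    exact mul_le_mul_of_nonneg_right h hN.le

lemma expect_mul_le_expect_mul_expect_of_antitone (A : Finset α) (n : ℕ)
    {f g : Finset α → ℝ} (hf : Antitone f) (hg : Antitone g)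
    (hfA : ∀ S, f (S ∩ A) = f S) (hgA : ∀ S, g (S \ A) = g S) :
    𝔼 S ∈ powersetCard n univ, f S * g S ≤
      (𝔼 S ∈ powersetCard n univ, f S) * 𝔼 S ∈ powersetCard n univ, g S := by
  simpa [expect_neg_distrib] using expect_mul_le_expect_mul_expect_of_monotone A n hf.neg hg.neg
    (fun S => by simp [hfA]) (fun S => by simp [hgA])

lemma expect_prod_le_prod_expect {ι : Type*} [DecidableEq ι] (n : ℕ) (J : Finset ι)
    {D : ι → Finset α} (hD : (J : Set ι).PairwiseDisjoint D) {f : ι → Finset α → ℝ}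
    (hf₀ : ∀ j ∈ J, ∀ S, 0 ≤ f j S) (hfD : ∀ j ∈ J, ∀ S, f j (S ∩ D j) = f j S)
    (hf : (∀ j ∈ J, Monotone (f j)) ∨ ∀ j ∈ J, Antitone (f j)) :
    𝔼 S ∈ powersetCard n univ, ∏ j ∈ J, f j S ≤ ∏ j ∈ J, 𝔼 S ∈ powersetCard n univ, f j S := by
  induction J using Finset.induction_on with
  | empty =>
    rcases (powersetCard n (univ : Finset α)).eq_empty_or_nonempty with h | h <;> simp [h]
  | insert j₀ J hj₀ ih =>
    simp only [mem_insert, forall_eq_or_imp, coe_insert] at hf₀ hfD hf hD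
    have hrest : ∀ S, ∏ j ∈ J, f j (S \ D j₀) = ∏ j ∈ J, f j S := fun S =>
      prod_congr rfl fun j hj => by
        have hdisj : Disjoint (D j₀) (D j) :=
          hD (Set.mem_insert _ _) (Set.mem_insert_of_mem _ hj) (by rintro rfl; exact hj₀ hj)
        rw [← hfD.2 j hj, ← hfD.2 j hj S, sdiff_inter_right_comm, sdiff_eq_self_of_disjoint
          (disjoint_of_subset_left inter_subset_right hdisj.symm)]
    have hD' : (J : Set ι).PairwiseDisjoint D := hD.subset (Set.subset_insert _ _)
    have hmono_rest : (Monotone (f j₀) ∧ Monotone fun S => ∏ j ∈ J, f j S) ∨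
        (Antitone (f j₀) ∧ Antitone fun S => ∏ j ∈ J, f j S) := by
      refine hf.imp (fun h => ⟨h.1, fun S T hST => ?_⟩) (fun h => ⟨h.1, fun S T hST => ?_⟩)
      · exact prod_le_prod (fun j hj => hf₀.2 j hj S) fun j hj => h.2 j hj hST
      · exact prod_le_prod (fun j hj => hf₀.2 j hj T) fun j hj => h.2 j hj hST
    have hcorr : 𝔼 S ∈ powersetCard n univ, f j₀ S * ∏ j ∈ J, f j S ≤
        (𝔼 S ∈ powersetCard n univ, f j₀ S) * 𝔼 S ∈ powersetCard n univ, ∏ j ∈ J, f j S := by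
      rcases hmono_rest with ⟨h₀, h⟩ | ⟨h₀, h⟩
      · exact expect_mul_le_expect_mul_expect_of_monotone _ n h₀ h hfD.1 hrest
      · exact expect_mul_le_expect_mul_expect_of_antitone _ n h₀ h hfD.1 hrest
    simp only [prod_insert hj₀]
    exact hcorr.trans (mul_le_mul_of_nonneg_left (ih hD' hf₀.2 hfD.2 (hf.imp (·.2) (·.2)))
      (expect_nonneg fun S _ => hf₀.1 S))

lemma expect_card_filter_subset {ι : Type*} {n : ℕ} (hn : n ≤ Fintype.card α) (J : Finset ι)
    {D : ι → Finset α} {b : ℕ} (hD : ∀ j ∈ J, #(D j) = b) :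
    𝔼 S ∈ powersetCard n univ, (#{j ∈ J | D j ⊆ S} : ℝ) =
      #J * (n.choose b / (Fintype.card α).choose b) := by
  have hprob : ∀ j ∈ J, 𝔼 S ∈ powersetCard n univ, (if D j ⊆ S then 1 else 0 : ℝ) =
      n.choose b / (Fintype.card α).choose b := fun j hj => by
    rw [expect_eq_sum_div_card, sum_boole, card_powersetCard, card_univ]
    by_cases hb : b ≤ n
    · have hcount := card_filter_powersetCard_subset (D j) univ n (subset_univ _) (hD j hj ▸ hb)
      rw [card_univ, hD j hj] at hcount
      have hpos : 0 < (Fintype.card α).choose n := Nat.choose_pos hn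
      have hpos' : 0 < (Fintype.card α).choose b := Nat.choose_pos (hb.trans hn)
      rw [hcount, div_eq_div_iff (by positivity) (by positivity)]
      exact_mod_cast (by rw [mul_comm, ← Nat.choose_mul hb, mul_comm] :
        (Fintype.card α - b).choose (n - b) * (Fintype.card α).choose b =
          n.choose b * (Fintype.card α).choose n)
    · have hempty : {S ∈ powersetCard n (univ : Finset α) | D j ⊆ S} = ∅ :=
        filter_eq_empty_iff.mpr fun S hS hDS => hb <| by
          simpa [hD j hj, (mem_powersetCard.mp hS).2] using card_le_card hDS
      simp [hempty, Nat.choose_eq_zero_of_lt (not_le.mp hb)]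
  simp only [card_filter, Nat.cast_sum, Nat.cast_ite, Nat.cast_one, Nat.cast_zero]
  rw [expect_sum_comm, sum_congr rfl hprob, sum_const, nsmul_eq_mul]

lemma expect_exp_mul_card_filter_subset_sub_le {ι : Type*} [DecidableEq ι] (n : ℕ) (J : Finset ι)
    {D : ι → Finset α} (hD : (J : Set ι).PairwiseDisjoint D) (t : ℝ) :
    𝔼 S ∈ powersetCard n univ, exp (t * ((#{j ∈ J | D j ⊆ S} : ℝ) -
      𝔼 S' ∈ powersetCard n univ, (#{j ∈ J | D j ⊆ S'} : ℝ))) ≤ exp (#J * t ^ 2 / 2) := by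
  set P := powersetCard n (univ : Finset α)
  rcases P.eq_empty_or_nonempty with hP | hP
  · simp [hP, (exp_pos _).le]
  set X : ι → Finset α → ℝ := fun j S => if D j ⊆ S then 1 else 0
  have hX : ∀ S, (#{j ∈ J | D j ⊆ S} : ℝ) = ∑ j ∈ J, X j S := fun S => by
    rw [card_filter]; push_cast; rfl
  set q : ι → ℝ := fun j => 𝔼 S ∈ P, X j S
  have hXmono : ∀ j, Monotone (X j) := fun j S T hST => by
    by_cases h : D j ⊆ S
    · simp [X, h, h.trans hST]
    · simp only [X, h, if_false]; split_ifs <;> norm_num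
  have hprod := expect_prod_le_prod_expect n J hD (f := fun j S => exp (t * X j S))
    (fun j _ S => (exp_pos _).le) (fun j _ S => by simp [X, subset_inter_iff])
    (by
      rcases le_total 0 t with ht | ht
      · exact .inl fun j _ S T hST => exp_le_exp.mpr (mul_le_mul_of_nonneg_left (hXmono j hST) ht)
      · exact .inr fun j _ S T hST => exp_le_exp.mpr (mul_le_mul_of_nonpos_left (hXmono j hST) ht))
  calc 𝔼 S ∈ P, exp (t * ((#{j ∈ J | D j ⊆ S} : ℝ) - 𝔼 S' ∈ P, (#{j ∈ J | D j ⊆ S'} : ℝ)))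
      = exp (-(t * ∑ j ∈ J, q j)) * 𝔼 S ∈ P, ∏ j ∈ J, exp (t * X j S) := by
        simp only [hX, mul_expect, ← exp_sum, ← mul_sum, ← exp_add, q, expect_sum_comm]
        congr 1; ext S; congr 1; ring
    _ ≤ exp (-(t * ∑ j ∈ J, q j)) * ∏ j ∈ J, exp (t * q j + t ^ 2 / 2) := by
        refine mul_le_mul_of_nonneg_left (hprod.trans ?_) (exp_pos _).le
        exact prod_le_prod (fun j _ => expect_nonneg fun S _ => (exp_pos _).le) fun j _ =>
          expect_exp_mul_ite_le hP _ t
    _ = exp (#J * t ^ 2 / 2) := by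
        rw [← exp_sum, ← exp_add, sum_add_distrib, sum_const, nsmul_eq_mul, ← mul_sum]
        ring_nf

lemma expect_perm_inv_smul_eq_expect_powersetCard {M : Type*} [AddCommMonoid M] [Module ℚ≥0 M]
    {n : ℕ} {L : Finset α} (hL : #L = n) (F : Finset α → M) :
    𝔼 σ : Equiv.Perm α, F (σ⁻¹ • L) = 𝔼 S ∈ powersetCard n univ, F S := by
  have := Set.powersetCard.isPretransitive (α := α) (n := n)
  calc 𝔼 σ : Equiv.Perm α, F (σ⁻¹ • L) = 𝔼 σ : Equiv.Perm α, F (σ • L) :=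
        Fintype.expect_equiv (Equiv.inv _) _ _ fun _ => rfl
    _ = 𝔼 S : Set.powersetCard α n, F S :=
        expect_smul_eq_expect_of_isPretransitive (fun S : Set.powersetCard α n => F S) ⟨L, hL⟩
    _ = 𝔼 S ∈ powersetCard n univ, F S :=
        expect_nbij' Subtype.val (fun S => if h : #S = n then ⟨S, h⟩ else ⟨L, hL⟩)
          (by simp) (by simp) (by simp) (by simp +contextual) (by simp)

end UniformSubsets

def batch (m B j : ℕ) : Finset (Fin m) := {i | (i : ℕ) / B = j}

lemma card_batch {m B j : ℕ} (hj : j < m / B) : #(batch m B j) = B := by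
  have hB : 0 < B := Nat.pos_of_ne_zero (by rintro rfl; simp at hj)
  have hjm : j * B + B ≤ m := by
    simpa [add_one_mul] using (Nat.mul_le_mul_right B hj).trans (Nat.div_mul_le_self m B)
  have himage : (batch m B j).map Fin.valEmbedding = Ico (j * B) (j * B + B) := by
    ext x
    simp only [batch, mem_map, mem_filter, mem_univ, true_and, Fin.valEmbedding_apply, mem_Ico]
    constructor
    · rintro ⟨i, hi, rfl⟩
      rw [Nat.div_eq_iff hB] at hi
      omega
    · intro hx
      exact ⟨⟨x, by omega⟩, (Nat.div_eq_iff hB).mpr (show j * B ≤ x ∧ x ≤ j * B + B - 1 by omega),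
        rfl⟩
  rw [← card_map, himage, Nat.card_Ico]
  omega

lemma pairwiseDisjoint_batch (m B : ℕ) (J : Finset ℕ) : (J : Set ℕ).PairwiseDisjoint (batch m B) :=
  fun _ _ _ _ hij => disjoint_left.mpr fun x hx hx' => hij <| by
    simp only [batch, mem_filter] at hx hx'
    rw [← hx.2, ← hx'.2]

def colorClass {m K : ℕ} (label : Fin m → Fin K) (c : Fin K) : Finset (Fin m) := {i | label i = c}

def numFullBatches (m B : ℕ) (S : Finset (Fin m)) : ℕ := #{j ∈ range (m / B) | batch m B j ⊆ S}

/-- Position `i` holds item `σ i`, so `σ⁻¹ • colorClass label c` is the set of positions holding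
items of label `c`. -/
lemma numMono_eq_sum_numFullBatches {m K : ℕ} (B : ℕ) (label : Fin m → Fin K)
    (σ : Equiv.Perm (Fin m)) :
    numMono B label σ = ∑ c, numFullBatches m B (σ⁻¹ • colorClass label c) := by
  simp only [numFullBatches, card_filter]
  rw [numMono, card_filter, sum_comm]
  refine sum_congr rfl fun j hj => ?_
  have hB : 0 < B := Nat.pos_of_ne_zero (by rintro rfl; simp at hj)
  have hne : (batch m B j).Nonempty :=
    ⟨⟨j * B, by have := Nat.div_mul_le_self m B; have := mem_range.mp hj; nlinarith⟩,
      by simp [batch, Nat.mul_div_cancel _ hB]⟩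
  have hsub : ∀ c, batch m B j ⊆ σ⁻¹ • colorClass label c ↔ ∀ i ∈ batch m B j, label (σ i) = c :=
    fun c => by simp [subset_iff, mem_inv_smul_finset_iff, colorClass]
  have hmono : MonoBatch B label σ j ↔ ∀ i ∈ batch m B j, ∀ i' ∈ batch m B j,
      label (σ i) = label (σ i') := by
    simp only [MonoBatch, batch, mem_filter, mem_univ, true_and]
    exact ⟨fun h i hi i' hi' => h i i' hi hi', fun h i i' hi hi' => h i hi i' hi'⟩
  rw [← card_filter]
  simp only [hsub, hmono]
  convert (card_filter_forall_mem_eq hne (fun i => label (σ i))).symm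

section Balanced

variable {m K n : ℕ} {B : ℕ} {label : Fin m → Fin K}

lemma expMono_eq_mul_expect (hbal : ∀ c, #(colorClass label c) = n) :
    expMono B label = K * 𝔼 S ∈ powersetCard n univ, (numFullBatches m B S : ℝ) := by
  rw [expMono, ← Fintype.expect_eq_sum_div_card]
  simp only [numMono_eq_sum_numFullBatches, Nat.cast_sum]
  rw [expect_sum_comm, sum_congr rfl fun c _ => expect_perm_inv_smul_eq_expect_powersetCard (hbal c)
    fun S => (numFullBatches m B S : ℝ)]
  simp only [sum_const, card_univ, Fintype.card_fin, nsmul_eq_mul]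

lemma expect_exp_mul_numMono_sub_expMono_le (hK : 0 < K) (hbal : ∀ c, #(colorClass label c) = n)
    (t : ℝ) :
    𝔼 σ, exp (t * ((numMono B label σ : ℝ) - expMono B label)) ≤
      exp (K ^ 2 * (m / B : ℕ) * t ^ 2 / 2) := by
  have : Nonempty (Fin K) := ⟨⟨0, hK⟩⟩
  set μ := 𝔼 S ∈ powersetCard n univ, (numFullBatches m B S : ℝ)
  have hsplit : ∀ σ : Equiv.Perm (Fin m), t * ((numMono B label σ : ℝ) - expMono B label) =
      ∑ c, t * ((numFullBatches m B (σ⁻¹ • colorClass label c) : ℝ) - μ) := fun σ => by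
    simp only [numMono_eq_sum_numFullBatches, expMono_eq_mul_expect hbal, Nat.cast_sum, ← mul_sum,
      sum_sub_distrib, sum_const, card_univ, Fintype.card_fin, nsmul_eq_mul, μ]
  calc 𝔼 σ, exp (t * ((numMono B label σ : ℝ) - expMono B label))
      ≤ 𝔼 σ, 𝔼 c, exp (K * (t * ((numFullBatches m B (σ⁻¹ • colorClass label c) : ℝ) - μ))) :=
        expect_le_expect fun σ _ => by
          simpa only [hsplit, Fintype.card_fin] using exp_sum_le_expect_exp (κ := Fin K) _
    _ = 𝔼 c, 𝔼 S ∈ powersetCard n univ, exp (K * t * ((numFullBatches m B S : ℝ) - μ)) := by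
        rw [expect_comm]
        refine expect_congr rfl fun c _ => ?_
        simp only [← mul_assoc]
        exact expect_perm_inv_smul_eq_expect_powersetCard (hbal c)
          fun S => exp (K * t * ((numFullBatches m B S : ℝ) - μ))
    _ ≤ 𝔼 c : Fin K, exp (#(range (m / B)) * (K * t) ^ 2 / 2) :=
        expect_le_expect fun c _ =>
          expect_exp_mul_card_filter_subset_sub_le n _ (pairwiseDisjoint_batch m B _) _
    _ = exp (K ^ 2 * (m / B : ℕ) * t ^ 2 / 2) := by
        rw [Fintype.expect_const, card_range]; ring_nf

end Balanced

end

/-- For `Kn` items with exactly `n` items of each of `K` labels,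
partitioned by a uniform permutation into batches of size `B ∣ Kn`:
`E[T] = (K²n/B)·C(n,B)/C(Kn,B)`, and for all `ε > 0`,
`P(|T − E[T]| ≥ ε) ≤ 2 exp(−Bε²/(2nK³))`. -/
theorem statement10 (K n B : ℕ) (hK : 1 ≤ K) (hn : 1 ≤ n) (hB : 1 ≤ B) (hdvd : B ∣ K * n)
    (label : Fin (K * n) → Fin K)
    (hbal : ∀ c : Fin K, (Finset.univ.filter (fun i => label i = c)).card = n) :
    expMono B label =
      ((K : ℝ) ^ 2 * n / B) * (n.choose B : ℝ) / ((K * n).choose B : ℝ) ∧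
    ∀ ε : ℝ, 0 < ε →
      (Nat.card {π : Equiv.Perm (Fin (K * n)) //
          ε ≤ |(numMono B label π : ℝ) - expMono B label|} : ℝ) /
          (Fintype.card (Equiv.Perm (Fin (K * n))) : ℝ) ≤
        2 * Real.exp (-(B * ε ^ 2) / (2 * n * K ^ 3)) := by
  have hmean : 𝔼 S ∈ powersetCard n univ, (numFullBatches (K * n) B S : ℝ) =
      (K * n / B : ℕ) * (n.choose B / (K * n).choose B) := by
    simpa [numFullBatches] using expect_card_filter_subset (α := Fin (K * n))
      (by simpa using Nat.le_mul_of_pos_left n hK) (range (K * n / B))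
      fun j hj => card_batch (mem_range.mp hj)
  have hM : ((K * n / B : ℕ) : ℝ) = K * n / B := by
    rw [Nat.cast_div hdvd (by positivity)]; push_cast; rfl
  refine ⟨?_, fun ε hε => ?_⟩
  · rw [expMono_eq_mul_expect hbal, hmean, hM]
    field_simp
  · have htail := card_abs_ge_div_card_le_of_expect_exp_le _ (c := K ^ 2 * (K * n / B : ℕ))
      (by rw [hM]; positivity) hε.le (expect_exp_mul_numMono_sub_expMono_le hK hbal)
    rw [Nat.card_eq_fintype_card, Fintype.card_subtype]
    convert htail using 3
    rw [hM]
    field_simp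

end SGDBN10
end

section
/- Let W ∈ ℝ^{p×d}, let Γ ∈ ℝ^{d×d} be diagonal, and set D = I_d + diag(WᵀW − Γ²), where diag(A) zeroes out the off-diagonal entries of A. If ‖D‖₂ ≤ ε for some ε < 1 and ‖WΓ‖₂ ≤ ξ, then ‖W‖₂ ≤ d·√(1 − ε + ξ) and ‖Γ²‖₂ ≤ 1 + ε + d²(1 − ε + ξ). -/
open Matrix

namespace SGDBN15

/-- Spectral norm `‖M‖₂` (supremum of `‖Mv‖₂` over the Euclidean unit ball). -/
noncomputable def specNorm {p d : ℕ} (M : Matrix (Fin p) (Fin d) ℝ) : ℝ :=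
  sSup {r : ℝ | ∃ v : Fin d → ℝ, ∑ i, v i ^ 2 ≤ 1 ∧ r = Real.sqrt (∑ a, M.mulVec v a ^ 2)}

lemma zero_mem {p d : ℕ} (M : Matrix (Fin p) (Fin d) ℝ) :
    (0:ℝ) ∈ {r : ℝ | ∃ v : Fin d → ℝ, ∑ i, v i ^ 2 ≤ 1 ∧
      r = Real.sqrt (∑ a, M.mulVec v a ^ 2)} :=
  ⟨0, by simp, by simp⟩

lemma bdd {p d : ℕ} (M : Matrix (Fin p) (Fin d) ℝ) :
    BddAbove {r : ℝ | ∃ v : Fin d → ℝ, ∑ i, v i ^ 2 ≤ 1 ∧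
      r = Real.sqrt (∑ a, M.mulVec v a ^ 2)} := by
  refine ⟨Real.sqrt (∑ a, ∑ i, M a i ^ 2), ?_⟩
  rintro r ⟨v, hv, rfl⟩
  apply Real.sqrt_le_sqrt
  apply Finset.sum_le_sum
  intro a _
  have h1 : (∑ i, M a i * v i) ^ 2 ≤ (∑ i, M a i ^ 2) * ∑ i, v i ^ 2 :=
    Finset.sum_mul_sq_le_sq_mul_sq _ _ _
  have h2 : (∑ i, M a i ^ 2) * ∑ i, v i ^ 2 ≤ (∑ i, M a i ^ 2) * 1 :=
    mul_le_mul_of_nonneg_left hv (Finset.sum_nonneg fun _ _ => sq_nonneg _)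
  have : M.mulVec v a = ∑ i, M a i * v i := by
    simp [Matrix.mulVec, dotProduct]
  rw [this]
  nlinarith [h1, h2]

lemma le_spec {p d : ℕ} (M : Matrix (Fin p) (Fin d) ℝ) (v : Fin d → ℝ)
    (hv : ∑ i, v i ^ 2 ≤ 1) :
    Real.sqrt (∑ a, M.mulVec v a ^ 2) ≤ specNorm M :=
  le_csSup (bdd M) ⟨v, hv, rfl⟩

lemma spec_le {p d : ℕ} (M : Matrix (Fin p) (Fin d) ℝ) (b : ℝ) (hb : 0 ≤ b)
    (h : ∀ v : Fin d → ℝ, ∑ i, v i ^ 2 ≤ 1 → ∑ a, M.mulVec v a ^ 2 ≤ b ^ 2) :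
    specNorm M ≤ b := by
  apply Real.sSup_le _ hb
  rintro r ⟨v, hv, rfl⟩
  rw [show b = Real.sqrt (b ^ 2) from (Real.sqrt_sq hb).symm]
  exact Real.sqrt_le_sqrt (h v hv)

lemma spec_nonneg {p d : ℕ} (M : Matrix (Fin p) (Fin d) ℝ) : 0 ≤ specNorm M :=
  le_csSup (bdd M) (zero_mem M)

/-- If `D = I + diag(WᵀW − Γ²)` satisfies `‖D‖₂ ≤ ε < 1` and
`‖WΓ‖₂ ≤ ξ`, then `‖W‖₂ ≤ d√(1 − ε + ξ)` and `‖Γ²‖₂ ≤ 1 + ε + d²(1 − ε + ξ)`. -/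
theorem statement15 (p d : ℕ) (W : Matrix (Fin p) (Fin d) ℝ) (γ : Fin d → ℝ)
    (ε ξ : ℝ) (hε : ε < 1)
    (hD : specNorm ((1 : Matrix (Fin d) (Fin d) ℝ) +
        Matrix.diagonal (fun i => (Wᵀ * W) i i - γ i ^ 2)) ≤ ε)
    (hWG : specNorm (W * Matrix.diagonal γ) ≤ ξ) :
    specNorm W ≤ d * Real.sqrt (1 - ε + ξ) ∧
    specNorm ((Matrix.diagonal γ) ^ 2) ≤ 1 + ε + d ^ 2 * (1 - ε + ξ) := by
  have hε0 : 0 ≤ ε := le_trans (spec_nonneg _) hD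
  have hξ0 : 0 ≤ ξ := le_trans (spec_nonneg _) hWG
  set c : Fin d → ℝ := fun i => ∑ a, W a i ^ 2 with hc
  have hcnn : ∀ i, 0 ≤ c i := fun i => Finset.sum_nonneg fun a _ => sq_nonneg _
  have hWtW : ∀ i, (Wᵀ * W) i i = c i := by
    intro i; simp [Matrix.mul_apply, hc, sq]
  -- unit vector probe
  have hsingle : ∀ i : Fin d, ∑ j, (Pi.single i 1 : Fin d → ℝ) j ^ 2 ≤ 1 := by
    intro i
    rw [Finset.sum_eq_single i]
    · simp
    · intro b _ hb; simp [Pi.single_apply, hb]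
    · simp
  have key1 : ∀ i, |1 + (c i - γ i ^ 2)| ≤ ε := by
    intro i
    have h := le_spec ((1 : Matrix (Fin d) (Fin d) ℝ) +
        Matrix.diagonal (fun i => (Wᵀ * W) i i - γ i ^ 2)) (Pi.single i 1) (hsingle i)
    have hmv : ∀ a, ((1 : Matrix (Fin d) (Fin d) ℝ) +
        Matrix.diagonal (fun i => (Wᵀ * W) i i - γ i ^ 2)).mulVec (Pi.single i 1) a
        = if a = i then 1 + (c i - γ i ^ 2) else 0 := by
      intro a
      simp [Matrix.mulVec, dotProduct, Matrix.add_apply, Matrix.one_apply,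
        Matrix.diagonal_apply, Pi.single_apply, mul_ite, Finset.sum_ite_eq',
        hWtW]
      split <;> simp_all
    rw [show (∑ a, ((1 : Matrix (Fin d) (Fin d) ℝ) +
        Matrix.diagonal (fun i => (Wᵀ * W) i i - γ i ^ 2)).mulVec (Pi.single i 1) a ^ 2)
        = (1 + (c i - γ i ^ 2)) ^ 2 from ?_] at h
    · rw [Real.sqrt_sq_eq_abs] at h
      exact le_trans h hD
    · rw [Finset.sum_eq_single i]
      · rw [hmv i]; simp
      · intro b _ hb; rw [hmv b]; simp [hb]
      · simp
  have key2 : ∀ i, γ i ^ 2 * c i ≤ ξ ^ 2 := by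
    intro i
    have h := le_spec (W * Matrix.diagonal γ) (Pi.single i 1) (hsingle i)
    have hmv : ∀ a, (W * Matrix.diagonal γ).mulVec (Pi.single i 1) a = W a i * γ i := by
      intro a
      simp [Matrix.mulVec, dotProduct, Matrix.mul_apply, Pi.single_apply,
        mul_ite, Finset.sum_ite_eq', Matrix.diagonal_apply]
    have hsum : (∑ a, (W * Matrix.diagonal γ).mulVec (Pi.single i 1) a ^ 2)
        = γ i ^ 2 * c i := by
      simp only [hmv, mul_pow, hc]
      rw [Finset.mul_sum]
      apply Finset.sum_congr rfl
      intro a _; ring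
    rw [hsum] at h
    have h' := le_trans h hWG
    have hnn : 0 ≤ γ i ^ 2 * c i := mul_nonneg (sq_nonneg _) (hcnn i)
    nlinarith [Real.sq_sqrt hnn, Real.sqrt_nonneg (γ i ^ 2 * c i)]
  have c_le : ∀ i, c i ≤ ξ := by
    intro i
    have h1 := (abs_le.mp (key1 i)).2
    have h3 : c i * (1 - ε + c i) ≤ c i * γ i ^ 2 :=
      mul_le_mul_of_nonneg_left (by linarith) (hcnn i)
    nlinarith [key2 i, hcnn i, hξ0, hε]
  have γsq_le : ∀ i, γ i ^ 2 ≤ 1 + ε + ξ := by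
    intro i
    have h1 := (abs_le.mp (key1 i)).1
    linarith [c_le i]
  have hd2 : (d : ℝ) ≤ (d : ℝ) ^ 2 := by
    have : d ≤ d ^ 2 := Nat.le_self_pow two_ne_zero d
    exact_mod_cast this
  have hx0 : (0:ℝ) ≤ 1 - ε + ξ := by linarith
  constructor
  · apply spec_le
    · positivity
    · intro v hv
      have hb2 : ((d:ℝ) * Real.sqrt (1 - ε + ξ)) ^ 2 = (d:ℝ) ^ 2 * (1 - ε + ξ) := by
        rw [mul_pow, Real.sq_sqrt hx0]
      rw [hb2]
      have hstep1 : ∑ a, W.mulVec v a ^ 2 ≤ ∑ i, c i := by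
        have : ∀ a, W.mulVec v a ^ 2 ≤ ∑ i, W a i ^ 2 := by
          intro a
          have h1 : (∑ i, W a i * v i) ^ 2 ≤ (∑ i, W a i ^ 2) * ∑ i, v i ^ 2 :=
            Finset.sum_mul_sq_le_sq_mul_sq _ _ _
          have h2 : (∑ i, W a i ^ 2) * ∑ i, v i ^ 2 ≤ (∑ i, W a i ^ 2) * 1 :=
            mul_le_mul_of_nonneg_left hv (Finset.sum_nonneg fun _ _ => sq_nonneg _)
          have hm : W.mulVec v a = ∑ i, W a i * v i := by
            simp [Matrix.mulVec, dotProduct]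
          rw [hm]; nlinarith
        calc ∑ a, W.mulVec v a ^ 2 ≤ ∑ a, ∑ i, W a i ^ 2 :=
              Finset.sum_le_sum fun a _ => this a
          _ = ∑ i, c i := Finset.sum_comm
      have hstep2 : ∑ i, c i ≤ (d : ℝ) * ξ := by
        calc ∑ i, c i ≤ ∑ _i : Fin d, ξ := Finset.sum_le_sum fun i _ => c_le i
          _ = (d : ℝ) * ξ := by simp [mul_comm]
      nlinarith [Nat.cast_nonneg (α := ℝ) d]
  · apply spec_le
    · nlinarith [sq_nonneg (d:ℝ)]
    · intro v hv
      have hmv : ∀ i, ((Matrix.diagonal γ) ^ 2).mulVec v i = γ i ^ 2 * v i := by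
        intro i
        rw [sq, Matrix.diagonal_mul_diagonal]
        simp [Matrix.mulVec, dotProduct, Matrix.diagonal_apply, mul_ite,
          Finset.sum_ite_eq', sq]
      rcases Nat.eq_zero_or_pos d with hd0 | hd1
      · subst hd0
        simp only [Finset.univ_eq_empty, Finset.sum_empty]
        nlinarith [sq_nonneg ((0:ℝ))]
      · have hξb : ξ ≤ (d:ℝ) ^ 2 * (1 - ε + ξ) := by
          have h1 : (1:ℝ) ≤ (d:ℝ) ^ 2 := by
            have : (1:ℕ) ≤ d ^ 2 := Nat.one_le_iff_ne_zero.mpr (by positivity)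
            exact_mod_cast this
          nlinarith
        have hb1 : (1:ℝ) + ε + ξ ≤ 1 + ε + (d:ℝ) ^ 2 * (1 - ε + ξ) := by linarith
        have hstep : ∑ i, ((Matrix.diagonal γ) ^ 2).mulVec v i ^ 2
            ≤ (1 + ε + ξ) ^ 2 := by
          calc ∑ i, ((Matrix.diagonal γ) ^ 2).mulVec v i ^ 2
              = ∑ i, (γ i ^ 2) ^ 2 * v i ^ 2 := by
                apply Finset.sum_congr rfl; intro i _; rw [hmv i]; ring
            _ ≤ ∑ i, (1 + ε + ξ) ^ 2 * v i ^ 2 := by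
                apply Finset.sum_le_sum
                intro i _
                apply mul_le_mul_of_nonneg_right _ (sq_nonneg _)
                have := γsq_le i
                nlinarith [sq_nonneg (γ i)]
            _ = (1 + ε + ξ) ^ 2 * ∑ i, v i ^ 2 := by rw [Finset.mul_sum]
            _ ≤ (1 + ε + ξ) ^ 2 * 1 :=
                mul_le_mul_of_nonneg_left hv (sq_nonneg _)
            _ = (1 + ε + ξ) ^ 2 := mul_one _
        have : (1 + ε + ξ) ^ 2 ≤ (1 + ε + (d:ℝ) ^ 2 * (1 - ε + ξ)) ^ 2 := by
          apply pow_le_pow_left₀ (by linarith) hb1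
        linarith

end SGDBN15
end

section
/- Let G, W ∈ ℝ^{p×d} and let Γ ∈ ℝ^{d×d} be diagonal with diagonal entries γ_1,…,γ_d. Then ⟨G, GΓ² + W·diag(WᵀG)⟩_F ≥ (min_{1≤i≤d} γ_i²)·‖G‖_F². In particular, for the two-layer risk L(M) = ‖Y − MX̄‖_F² with M = WΓ and G = −(Y − WΓX̄)X̄ᵀ, the aggregated update direction g̃ = GΓ² + W·diag(WᵀG) satisfies ⟨G, g̃⟩_F ≥ σ_min(Γ)²‖G‖_F². -/
open Matrix

namespace SGDBN17

/-- Frobenius inner product. -/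
noncomputable def frobInner {m k : ℕ} (A B : Matrix (Fin m) (Fin k) ℝ) : ℝ :=
  ∑ i, ∑ j, A i j * B i j

/-- Squared Frobenius norm. -/
noncomputable def frobSq {m k : ℕ} (A : Matrix (Fin m) (Fin k) ℝ) : ℝ :=
  ∑ i, ∑ j, A i j ^ 2

lemma key {p d : ℕ} (G W : Matrix (Fin p) (Fin d) ℝ) (γ : Fin d → ℝ) :
    (⨅ i : Fin d, γ i ^ 2) * frobSq G ≤
      frobInner G (G * (Matrix.diagonal γ) ^ 2 +
        W * Matrix.diagonal (fun b => (Wᵀ * G) b b)) := by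
  have hD : (Matrix.diagonal γ) ^ 2 = Matrix.diagonal (fun i => γ i ^ 2) := by
    rw [sq, Matrix.diagonal_mul_diagonal]
    simp [sq]
  have hinner : frobInner G (G * (Matrix.diagonal γ) ^ 2 +
        W * Matrix.diagonal (fun b => (Wᵀ * G) b b)) =
      ∑ j, (γ j ^ 2 * ∑ i, G i j ^ 2 + ((Wᵀ * G) j j) ^ 2) := by
    simp only [frobInner, hD, Matrix.add_apply, Matrix.mul_diagonal]
    rw [Finset.sum_comm]
    refine Finset.sum_congr rfl fun j _ => ?_
    have hWG : (Wᵀ * G) j j = ∑ i, W i j * G i j := by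
      simp [Matrix.mul_apply, Matrix.transpose_apply]
    rw [hWG]
    simp only [mul_add, Finset.sum_add_distrib]
    congr 1
    · rw [Finset.mul_sum]
      exact Finset.sum_congr rfl fun i _ => by ring
    · rw [sq, Finset.sum_mul]
      exact Finset.sum_congr rfl fun i _ => by ring
  rw [hinner]
  have hfs : frobSq G = ∑ j, ∑ i, G i j ^ 2 := by
    rw [frobSq]; exact Finset.sum_comm ..
  rw [hfs, Finset.mul_sum]
  refine Finset.sum_le_sum fun j _ => ?_
  have h1 : (⨅ i : Fin d, γ i ^ 2) ≤ γ j ^ 2 :=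
    ciInf_le ⟨0, fun x ⟨i, hi⟩ => hi ▸ sq_nonneg _⟩ j
  have h2 : (0:ℝ) ≤ ∑ i, G i j ^ 2 := Finset.sum_nonneg fun i _ => sq_nonneg _
  nlinarith [sq_nonneg ((Wᵀ * G) j j)]


/-- `⟨G, GΓ² + W·diag(WᵀG)⟩_F ≥ (min_i γ_i²)·‖G‖_F²`; in particular,
for `G = −(Y − WΓX̄)X̄ᵀ`, the aggregated update direction `g̃ = GΓ² + W·diag(WᵀG)`
satisfies `⟨G, g̃⟩_F ≥ σ_min(Γ)²·‖G‖_F²`. -/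
theorem statement17 (p d : ℕ) (G W : Matrix (Fin p) (Fin d) ℝ) (γ : Fin d → ℝ) :
    ((⨅ i : Fin d, γ i ^ 2) * frobSq G ≤
      frobInner G (G * (Matrix.diagonal γ) ^ 2 +
        W * Matrix.diagonal (fun b => (Wᵀ * G) b b))) ∧
    (∀ (n : ℕ) (Y : Matrix (Fin p) (Fin n) ℝ) (Xb : Matrix (Fin d) (Fin n) ℝ),
      (⨅ i : Fin d, γ i ^ 2) * frobSq (-((Y - W * Matrix.diagonal γ * Xb) * Xbᵀ)) ≤
        frobInner (-((Y - W * Matrix.diagonal γ * Xb) * Xbᵀ))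
          ((-((Y - W * Matrix.diagonal γ * Xb) * Xbᵀ)) * (Matrix.diagonal γ) ^ 2 +
            W * Matrix.diagonal
              (fun b => (Wᵀ * (-((Y - W * Matrix.diagonal γ * Xb) * Xbᵀ))) b b))) :=
  ⟨key G W γ, fun _ _ _ => key _ W γ⟩

end SGDBN17
end
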